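/- arXiv:2010.02000 — 4 statements merged into one kernel-verified Lean document; each statement's English description precedes it below -/
import Mathlib

section
/- Let q > 1 and let f : ℝ → ℝ be continuous with f(0) = 0, such that the map u ↦ f(u)/|u|^{q-1} is nondecreasing on (0, +∞). Then for every u > 0, q·F(u) ≤ f(u)·u, where F(u) = ∫₀ᵘ f(s) ds. -/
open intervalIntegral

open Real Set MeasureTheory

theorem integral_rpow_sub_one_zero {q : ℝ} (hq : 0 < q) (u : ℝ) :
    ∫ s in (0:ℝ)..u, s ^ (q - 1) = u ^ q / q := by
  rw [integral_rpow (Or.inl (by linarith)), sub_add_cancel, zero_rpow hq.ne', sub_zero]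

/-- Compare `f` on `(0, u)` with `c * s ^ (q - 1)`, `c = f u / u ^ (q - 1)`, whose integral over
`[0, u]` is `f u * u / q`. -/
theorem mul_integral_le_of_div_rpow_le {f : ℝ → ℝ} {q u : ℝ} (hq : 0 < q) (hu : 0 < u)
    (hf : IntervalIntegrable f volume 0 u)
    (hle : ∀ s ∈ Ioo 0 u, f s / s ^ (q - 1) ≤ f u / u ^ (q - 1)) :
    q * ∫ s in (0:ℝ)..u, f s ≤ f u * u := by
  set c := f u / u ^ (q - 1) with hc
  have hbound : ∀ s ∈ Ioo 0 u, f s ≤ c * s ^ (q - 1) := fun s hs =>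
    (div_le_iff₀ (rpow_pos_of_pos hs.1 _)).1 (hle s hs)
  have hint : ∫ s in (0:ℝ)..u, f s ≤ c * (u ^ q / q) :=
    calc ∫ s in (0:ℝ)..u, f s ≤ ∫ s in (0:ℝ)..u, c * s ^ (q - 1) :=
          integral_mono_on_of_le_Ioo hu.le hf
            ((intervalIntegrable_rpow' (by linarith)).const_mul c) hbound
      _ = c * (u ^ q / q) := by
          rw [intervalIntegral.integral_const_mul, integral_rpow_sub_one_zero hq]
  calc q * ∫ s in (0:ℝ)..u, f s ≤ q * (c * (u ^ q / q)) := by gcongr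
    _ = f u * u := by
      rw [hc, rpow_sub_one hu.ne']
      field_simp

theorem stmt0_general (q : ℝ) (hq : 1 < q) (f : ℝ → ℝ) (hf : Continuous f)
    (hmono : ∀ a b : ℝ, 0 < a → a ≤ b → f a / a ^ (q - 1) ≤ f b / b ^ (q - 1)) :
    ∀ u : ℝ, 0 < u → q * ∫ s in (0:ℝ)..u, f s ≤ f u * u := fun u hu =>
  mul_integral_le_of_div_rpow_le (by linarith) hu (hf.intervalIntegrable 0 u)
    fun s hs => hmono s u hs.1 hs.2.le

theorem stmt0 (q : ℝ) (hq : 1 < q) (f : ℝ → ℝ) (hf : Continuous f) (hf0 : f 0 = 0)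
    (hmono : ∀ a b : ℝ, 0 < a → a ≤ b → f a / a ^ (q - 1) ≤ f b / b ^ (q - 1)) :
    ∀ u : ℝ, 0 < u → q * ∫ s in (0:ℝ)..u, f s ≤ f u * u :=
  stmt0_general q hq f hf hmono
end

section
/- Let q > 1 and let g : ℝ → ℝ be continuous with g(0) = 0, such that the map u ↦ g(u)/|u|^{q-1} is nonincreasing on (0, +∞). Then for every u > 0, q·G(u) ≥ g(u)·u, where G(u) = ∫₀ᵘ g(s) ds. -/
open intervalIntegral

/-!
On `(0, u]` the monotonicity of `g s / s ^ (q - 1)` gives `g s ≥ c s ^ (q - 1)` with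
`c = g u / u ^ (q - 1)`; integrating over `[0, u]` yields `G u ≥ c u ^ q / q = g u * u / q`.
-/

theorem mul_rpow_le_of_antitoneOn_div_rpow {g : ℝ → ℝ} {p u s : ℝ}
    (hmono : AntitoneOn (fun s => g s / s ^ p) (Set.Ioi 0)) (hs : 0 < s) (hsu : s ≤ u) :
    g u / u ^ p * s ^ p ≤ g s := by
  have hsp : 0 < s ^ p := Real.rpow_pos_of_pos hs p
  calc g u / u ^ p * s ^ p ≤ g s / s ^ p * s ^ p :=
        mul_le_mul_of_nonneg_right (hmono hs (hs.trans_le hsu) hsu) hsp.le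
    _ = g s := div_mul_cancel₀ _ hsp.ne'

theorem integral_zero_rpow_sub_one {q : ℝ} (hq : 0 < q) (u : ℝ) :
    ∫ s in (0 : ℝ)..u, s ^ (q - 1) = u ^ q / q := by
  rw [integral_rpow (Or.inl (by linarith)), Real.zero_rpow (by linarith)]
  ring_nf

theorem mul_self_le_mul_integral_of_antitoneOn_div_rpow {g : ℝ → ℝ} {q u : ℝ} (hq : 0 < q)
    (hu : 0 < u) (hg : IntervalIntegrable g MeasureTheory.volume 0 u)
    (hmono : AntitoneOn (fun s => g s / s ^ (q - 1)) (Set.Ioi 0)) :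
    g u * u ≤ q * ∫ s in (0 : ℝ)..u, g s := by
  have hbound : g u / u ^ (q - 1) * (u ^ q / q) ≤ ∫ s in (0 : ℝ)..u, g s := by
    rw [← integral_zero_rpow_sub_one hq u, ← integral_const_mul]
    refine integral_mono_on_of_le_Ioo hu.le
      ((intervalIntegrable_rpow' (by linarith)).const_mul _) hg fun s hs => ?_
    exact mul_rpow_le_of_antitoneOn_div_rpow hmono hs.1 hs.2.le
  have hc : g u / u ^ (q - 1) * (u ^ q / q) = g u * u / q := by
    rw [Real.rpow_sub_one hu.ne']
    field_simp
  rw [hc, div_le_iff₀ hq] at hbound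
  linarith

theorem stmt1_general (q : ℝ) (hq : 1 < q) (g : ℝ → ℝ) (hg : Continuous g)
    (hmono : ∀ a b : ℝ, 0 < a → a ≤ b → g b / b ^ (q - 1) ≤ g a / a ^ (q - 1)) :
    ∀ u : ℝ, 0 < u → g u * u ≤ q * ∫ s in (0:ℝ)..u, g s :=
  fun _ hu => mul_self_le_mul_integral_of_antitoneOn_div_rpow (by linarith) hu
    (hg.intervalIntegrable _ _) fun a ha _ _ hab => hmono a _ ha hab

theorem stmt1 (q : ℝ) (hq : 1 < q) (g : ℝ → ℝ) (hg : Continuous g) (hg0 : g 0 = 0)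
    (hmono : ∀ a b : ℝ, 0 < a → a ≤ b → g b / b ^ (q - 1) ≤ g a / a ^ (q - 1)) :
    ∀ u : ℝ, 0 < u → g u * u ≤ q * ∫ s in (0:ℝ)..u, g s :=
  stmt1_general q hq g hg hmono
end

section
/- Let f, g : ℝ → ℝ be continuous with f(0)=g(0)=0, q > 2, u ↦ f(u)/u^{q-1} nondecreasing on (0,∞) and u ↦ g(u)/u^{q-1} nonincreasing on (0,∞). Fix u > 0 with f(u)u > g(u)u, and define φ(t) := ((t²-1)/2)(f(u)-g(u))u − (F(tu)−G(tu)) + (F(u)−G(u)) for t > 0, where F, G are the primitives vanishing at 0. Then φ(t) ≤ 0 for all t > 0, with φ(1) = 0. -/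
/-! With `h = f - g`, the ratio `h s / s ^ (q - 1)` is nondecreasing and `h u > 0`, so for
`s ≥ 1` we get `h (s u) ≥ s ^ (q - 1) h u ≥ s h u`, and the reverse inequalities for `s ≤ 1`.
Since `φ' t = u (t h u - h (t u))`, the function `φ` increases on `(0, 1]` and decreases on
`[1, ∞)`, so it is maximal at `t = 1`, where it vanishes. -/

open intervalIntegral Set

theorem le_of_hasDerivAt_nonpos_of_nonneg {ψ ψ' : ℝ → ℝ} {a c t : ℝ}
    (hψ : ∀ x, HasDerivAt ψ (ψ' x) x) (hleft : ∀ x ∈ Ioo a c, ψ' x ≤ 0)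
    (hright : ∀ x ∈ Ioi c, 0 ≤ ψ' x) (ht : a < t) : ψ c ≤ ψ t := by
  have hcont : Continuous ψ := continuous_iff_continuousAt.2 fun x => (hψ x).continuousAt
  rcases le_or_gt t c with htc | hct
  · refine antitoneOn_of_hasDerivWithinAt_nonpos (convex_Icc t c) hcont.continuousOn
      (fun x _ => (hψ x).hasDerivWithinAt) (fun x hx => hleft x ?_)
      (left_mem_Icc.2 htc) (right_mem_Icc.2 htc) htc
    rw [interior_Icc] at hx
    exact ⟨ht.trans hx.1, hx.2⟩
  · refine monotoneOn_of_hasDerivWithinAt_nonneg (convex_Icc c t) hcont.continuousOn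
      (fun x _ => (hψ x).hasDerivWithinAt) (fun x hx => hright x ?_)
      (left_mem_Icc.2 hct.le) (right_mem_Icc.2 hct.le) hct.le
    rw [interior_Icc] at hx
    exact hx.1

section RatioMonotone

variable {h : ℝ → ℝ} {p u s : ℝ}

theorem mul_rpow_eq_div_rpow_mul (hu : 0 < u) (hs : 0 < s) :
    h u * s ^ p = h u / u ^ p * (s * u) ^ p := by
  rw [Real.mul_rpow hs.le hu.le]
  field_simp

theorem mul_rpow_le_of_monotoneOn_div_rpow (hh : MonotoneOn (fun a => h a / a ^ p) (Ioi 0))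
    (hu : 0 < u) (hs : 1 ≤ s) : h u * s ^ p ≤ h (s * u) := by
  have hsu : 0 < s * u := by positivity
  calc h u * s ^ p = h u / u ^ p * (s * u) ^ p := mul_rpow_eq_div_rpow_mul hu (by positivity)
    _ ≤ h (s * u) / (s * u) ^ p * (s * u) ^ p :=
      mul_le_mul_of_nonneg_right (hh hu hsu (le_mul_of_one_le_left hu.le hs)) (by positivity)
    _ = h (s * u) := div_mul_cancel₀ _ (by positivity)

theorem le_mul_rpow_of_monotoneOn_div_rpow (hh : MonotoneOn (fun a => h a / a ^ p) (Ioi 0))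
    (hu : 0 < u) (hs0 : 0 < s) (hs : s ≤ 1) : h (s * u) ≤ h u * s ^ p := by
  have hsu : 0 < s * u := by positivity
  calc h (s * u) = h (s * u) / (s * u) ^ p * (s * u) ^ p := (div_mul_cancel₀ _ (by positivity)).symm
    _ ≤ h u / u ^ p * (s * u) ^ p :=
      mul_le_mul_of_nonneg_right (hh hsu hu (mul_le_of_le_one_left hu.le hs)) (by positivity)
    _ = h u * s ^ p := (mul_rpow_eq_div_rpow_mul hu hs0).symm

theorem mul_le_of_monotoneOn_div_rpow (hh : MonotoneOn (fun a => h a / a ^ p) (Ioi 0))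
    (hp : 1 ≤ p) (hu : 0 < u) (hhu : 0 ≤ h u) (hs : 1 ≤ s) : s * h u ≤ h (s * u) :=
  calc s * h u ≤ h u * s ^ p := by
        rw [mul_comm]
        exact mul_le_mul_of_nonneg_left (Real.self_le_rpow_of_one_le hs hp) hhu
    _ ≤ h (s * u) := mul_rpow_le_of_monotoneOn_div_rpow hh hu hs

theorem le_mul_of_monotoneOn_div_rpow (hh : MonotoneOn (fun a => h a / a ^ p) (Ioi 0))
    (hp : 1 ≤ p) (hu : 0 < u) (hhu : 0 ≤ h u) (hs0 : 0 < s) (hs : s ≤ 1) :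
    h (s * u) ≤ s * h u :=
  calc h (s * u) ≤ h u * s ^ p := le_mul_rpow_of_monotoneOn_div_rpow hh hu hs0 hs
    _ ≤ s * h u := by
        rw [mul_comm]
        exact mul_le_mul_of_nonneg_right (Real.rpow_le_self_of_le_one hs0.le hs hp) hhu

theorem sq_sub_one_div_two_mul_le_integral (hc : Continuous h)
    (hh : MonotoneOn (fun a => h a / a ^ p) (Ioi 0)) (hp : 1 ≤ p) (hu : 0 < u) (hhu : 0 ≤ h u)
    {t : ℝ} (ht : 0 < t) : (t ^ 2 - 1) / 2 * (h u * u) ≤ ∫ τ in u..t * u, h τ := by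
  set ψ : ℝ → ℝ := fun x => (∫ τ in u..x * u, h τ) - (x ^ 2 - 1) / 2 * (h u * u)
  have hψ : ∀ x, HasDerivAt ψ (h (x * u) * u - x * (h u * u)) x := by
    intro x
    have hint := (hc.integral_hasStrictDerivAt u (x * u)).hasDerivAt.comp x
      (hasDerivAt_mul_const u)
    have hsq := ((hasDerivAt_pow 2 x).sub_const 1).div_const 2 |>.mul_const (h u * u)
    exact (hint.sub hsq).congr_deriv (by norm_num)
  have hψ1 : ψ 1 = 0 := by simp [ψ]
  have key := le_of_hasDerivAt_nonpos_of_nonneg hψ (a := 0) (c := 1)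
    (fun x hx => by nlinarith [le_mul_of_monotoneOn_div_rpow hh hp hu hhu hx.1 hx.2.le])
    (fun x hx => by nlinarith [mul_le_of_monotoneOn_div_rpow hh hp hu hhu hx.le]) ht
  simp only [hψ1, ψ] at key
  linarith

end RatioMonotone

theorem stmt12_general (q : ℝ) (hq : 2 < q) (f g : ℝ → ℝ) (hf : Continuous f) (hg : Continuous g)
    (hfmono : ∀ a b : ℝ, 0 < a → a ≤ b → f a / a ^ (q - 1) ≤ f b / b ^ (q - 1))
    (hgmono : ∀ a b : ℝ, 0 < a → a ≤ b → g b / b ^ (q - 1) ≤ g a / a ^ (q - 1))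
    (u : ℝ) (hu : 0 < u) (hNehari : g u * u < f u * u) :
    let F : ℝ → ℝ := fun s => ∫ τ in (0:ℝ)..s, f τ
    let G : ℝ → ℝ := fun s => ∫ τ in (0:ℝ)..s, g τ
    let φ : ℝ → ℝ := fun t =>
      ((t ^ 2 - 1) / 2) * ((f u - g u) * u) - (F (t * u) - G (t * u)) + (F u - G u)
    φ 1 = 0 ∧ ∀ t > 0, φ t ≤ 0 := by
  intro F G φ
  have hmono : MonotoneOn (fun a => (f - g) a / a ^ (q - 1)) (Ioi 0) := fun a ha b _ hab => by
    simp only [Pi.sub_apply, sub_div]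
    exact sub_le_sub (hfmono a b ha hab) (hgmono a b ha hab)
  have hpos : 0 ≤ (f - g) u := sub_nonneg.2 (le_of_mul_le_mul_right hNehari.le hu)
  have hφ : ∀ t, φ t = (t ^ 2 - 1) / 2 * ((f - g) u * u) - ∫ τ in u..t * u, (f - g) τ := by
    intro t
    simp only [Pi.sub_apply]
    rw [integral_sub (hf.intervalIntegrable _ _) (hg.intervalIntegrable _ _),
      ← integral_interval_sub_left (hf.intervalIntegrable _ _) (hf.intervalIntegrable _ _),
      ← integral_interval_sub_left (hg.intervalIntegrable _ _) (hg.intervalIntegrable _ _)]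
    simp only [φ, F, G]
    ring
  refine ⟨by simp [hφ], fun t ht => ?_⟩
  rw [hφ, sub_nonpos]
  exact sq_sub_one_div_two_mul_le_integral (hf.sub hg) hmono (by linarith) hu hpos ht

theorem stmt12 (q : ℝ) (hq : 2 < q) (f g : ℝ → ℝ) (hf : Continuous f) (hg : Continuous g)
    (hf0 : f 0 = 0) (hg0 : g 0 = 0)
    (hfmono : ∀ a b : ℝ, 0 < a → a ≤ b → f a / a ^ (q - 1) ≤ f b / b ^ (q - 1))
    (hgmono : ∀ a b : ℝ, 0 < a → a ≤ b → g b / b ^ (q - 1) ≤ g a / a ^ (q - 1))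
    (u : ℝ) (hu : 0 < u) (hNehari : g u * u < f u * u) :
    let F : ℝ → ℝ := fun s => ∫ τ in (0:ℝ)..s, f τ
    let G : ℝ → ℝ := fun s => ∫ τ in (0:ℝ)..s, g τ
    let φ : ℝ → ℝ := fun t =>
      ((t ^ 2 - 1) / 2) * ((f u - g u) * u) - (F (t * u) - G (t * u)) + (F u - G u)
    φ 1 = 0 ∧ ∀ t > 0, φ t ≤ 0 :=
  stmt12_general q hq f g hf hg hfmono hgmono u hu hNehari
end

section
/- Let F : ℝ³×ℝ → ℝ with F(x,u)/|u|^q → +∞ uniformly in x as |u| → ∞ and F ≥ 0, and let G satisfy 0 ≤ G(x,u) ≤ ε u² + C_ε|u|^q for all ε > 0. If tₙ → +∞ and uₙ → u ≠ 0 in L²∩L^q with uₙ(x) → u(x) a.e., then (1/tₙ²)∫ (F(x,tₙuₙ) − G(x,tₙuₙ)) dx → +∞. -/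
/-!
Pointwise, `F - G ≥ |s| ^ q - D s²` for one constant `D`: the superlinear growth of `F`
absorbs the `|s| ^ q` part of the bound on `G` for `|s| ≥ R`, and for `|s| < R` one has
`|s| ^ q ≤ R ^ (q - 2) s²`. Scaling by `t` gives
`t⁻² ∫ (F - G)(t uₙ) ≥ t ^ (q - 2) ∫ |uₙ| ^ q - D ∫ uₙ²`. Convergence in `L²` and `L^q`
gives `∫ uₙ² → ∫ u²` and `∫ |uₙ| ^ q → ∫ |u| ^ q > 0`, so the right side tends to `+∞`
because `q > 2`.
-/

open MeasureTheory Filter Topology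
open scoped ENNReal

namespace MeasureTheory

variable {α E : Type*} {m : MeasurableSpace α} {μ : Measure α} [NormedAddCommGroup E]
  {p : ℝ≥0∞}

lemma MemLp.of_eLpNorm_sub_lt_top {f g : α → E} (hf : AEStronglyMeasurable f μ)
    (hg : MemLp g p μ) (hfg : eLpNorm (f - g) p μ < ∞) : MemLp f p μ := by
  simpa using (show MemLp (f - g) p μ from ⟨hf.sub hg.1, hfg⟩).add hg

lemma integral_norm_rpow_eq_lpNorm_rpow {f : α → E} (hp₀ : p ≠ 0) (hp : p ≠ ∞)
    (hf : AEStronglyMeasurable f μ) :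
    ∫ x, ‖f x‖ ^ p.toReal ∂μ = lpNorm f p μ ^ p.toReal := by
  rw [lpNorm_eq_integral_norm_rpow_toReal hp₀ hp hf,
    Real.rpow_inv_rpow (integral_nonneg fun _ => by positivity)
      (ENNReal.toReal_ne_zero.2 ⟨hp₀, hp⟩)]

lemma integral_norm_rpow_pos {f : α → E} (hp₀ : p ≠ 0) (hp : p ≠ ∞) (hf : MemLp f p μ)
    (hf₀ : ¬ f =ᵐ[μ] 0) : 0 < ∫ x, ‖f x‖ ^ p.toReal ∂μ := by
  rw [integral_norm_rpow_eq_lpNorm_rpow hp₀ hp hf.1]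
  exact Real.rpow_pos_of_pos
    (lpNorm_nonneg.lt_of_ne (Ne.symm ((lpNorm_eq_zero hf hp₀).not.2 hf₀))) _

section Convergence

variable {u : ℕ → α → E} {u₀ : α → E}

lemma eventually_memLp_of_tendsto_eLpNorm_sub (hu : ∀ n, AEStronglyMeasurable (u n) μ)
    (hu₀ : MemLp u₀ p μ) (h : Tendsto (fun n => eLpNorm (u n - u₀) p μ) atTop (𝓝 0)) :
    ∀ᶠ n in atTop, MemLp (u n) p μ :=
  (h.eventually_lt_const ENNReal.zero_lt_top).mono fun n hn =>
    MemLp.of_eLpNorm_sub_lt_top (hu n) hu₀ hn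

lemma tendsto_lpNorm_of_tendsto_eLpNorm_sub (hp : 1 ≤ p)
    (hu : ∀ n, AEStronglyMeasurable (u n) μ) (hu₀ : MemLp u₀ p μ)
    (h : Tendsto (fun n => eLpNorm (u n - u₀) p μ) atTop (𝓝 0)) :
    Tendsto (fun n => lpNorm (u n) p μ) atTop (𝓝 (lpNorm u₀ p μ)) := by
  have hd : Tendsto (fun n => lpNorm (u n - u₀) p μ) atTop (𝓝 0) := by
    simpa only [← toReal_eLpNorm ((hu _).sub hu₀.1), Function.comp_def, ENNReal.toReal_zero]
      using (ENNReal.tendsto_toReal ENNReal.zero_ne_top).comp h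
  refine tendsto_of_tendsto_of_tendsto_of_le_of_le'
    (by simpa using hd.const_sub (lpNorm u₀ p μ))
    (by simpa using hd.const_add (lpNorm u₀ p μ)) ?_
    (.of_forall fun n => lpNorm_le_lpNorm_add_lpNorm_sub' hu₀ hp)
  filter_upwards [eventually_memLp_of_tendsto_eLpNorm_sub hu hu₀ h] with n hn
  have := lpNorm_le_lpNorm_add_lpNorm_sub' (f := u₀) hn hp
  rw [lpNorm_sub_comm] at this
  linarith

lemma tendsto_integral_norm_rpow_of_tendsto_eLpNorm_sub (hp : 1 ≤ p) (hp_top : p ≠ ∞)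
    (hu : ∀ n, AEStronglyMeasurable (u n) μ) (hu₀ : MemLp u₀ p μ)
    (h : Tendsto (fun n => eLpNorm (u n - u₀) p μ) atTop (𝓝 0)) :
    Tendsto (fun n => ∫ x, ‖u n x‖ ^ p.toReal ∂μ) atTop
      (𝓝 (∫ x, ‖u₀ x‖ ^ p.toReal ∂μ)) := by
  have hp₀ : p ≠ 0 := (zero_lt_one.trans_le hp).ne'
  simp only [integral_norm_rpow_eq_lpNorm_rpow hp₀ hp_top (hu _),
    integral_norm_rpow_eq_lpNorm_rpow hp₀ hp_top hu₀.1]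
  exact (tendsto_lpNorm_of_tendsto_eLpNorm_sub hp hu hu₀ h).rpow_const
    (Or.inr ENNReal.toReal_nonneg)

end Convergence

section Real

variable {q : ℝ}

lemma MemLp.integrable_abs_rpow {f : α → ℝ} (hq : 0 < q) (hf : MemLp f (.ofReal q) μ) :
    Integrable (fun x => |f x| ^ q) μ := by
  simpa only [Real.norm_eq_abs, ENNReal.toReal_ofReal hq.le] using
    hf.integrable_norm_rpow (by simpa using hq) ENNReal.ofReal_ne_top

lemma integral_abs_rpow_pos {f : α → ℝ} (hq : 0 < q) (hf : MemLp f (.ofReal q) μ)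
    (hf₀ : ¬ f =ᵐ[μ] 0) : 0 < ∫ x, |f x| ^ q ∂μ := by
  simpa only [Real.norm_eq_abs, ENNReal.toReal_ofReal hq.le] using
    integral_norm_rpow_pos (by simpa using hq) ENNReal.ofReal_ne_top hf hf₀

lemma tendsto_integral_abs_rpow_of_tendsto_eLpNorm_sub {u : ℕ → α → ℝ} {u₀ : α → ℝ}
    (hq : 1 ≤ q) (hu : ∀ n, AEStronglyMeasurable (u n) μ) (hu₀ : MemLp u₀ (.ofReal q) μ)
    (h : Tendsto (fun n => eLpNorm (u n - u₀) (.ofReal q) μ) atTop (𝓝 0)) :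
    Tendsto (fun n => ∫ x, |u n x| ^ q ∂μ) atTop (𝓝 (∫ x, |u₀ x| ^ q ∂μ)) := by
  simpa only [Real.norm_eq_abs, ENNReal.toReal_ofReal (zero_le_one.trans hq)] using
    tendsto_integral_norm_rpow_of_tendsto_eLpNorm_sub (by simpa using hq) ENNReal.ofReal_ne_top
      hu hu₀ h

end Real

end MeasureTheory

lemma tendsto_rpow_mul_sub_mul_atTop {ι : Type*} {l : Filter ι} {t A B : ι → ℝ} {r a b D : ℝ}
    (hr : 0 < r) (ht : Tendsto t l atTop) (hA : Tendsto A l (𝓝 a)) (ha : 0 < a)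
    (hB : Tendsto B l (𝓝 b)) : Tendsto (fun i => t i ^ r * A i - D * B i) l atTop := by
  simpa only [Function.comp_apply, neg_mul, ← sub_eq_add_neg] using
    (((tendsto_rpow_atTop hr).comp ht).atTop_mul_pos ha hA).atTop_add (hB.const_mul (-D))

lemma abs_rpow_le_rpow_sub_two_mul_sq {q R s : ℝ} (hq : 2 ≤ q) (hs : |s| ≤ R) :
    |s| ^ q ≤ R ^ (q - 2) * s ^ 2 := by
  calc |s| ^ q = |s| ^ (q - 2) * |s| ^ 2 := by
        rw [← Real.rpow_natCast, ← Real.rpow_add' (abs_nonneg s) (by norm_num; linarith)]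
        norm_num
    _ ≤ R ^ (q - 2) * s ^ 2 := by
        rw [sq_abs]
        gcongr

lemma rpow_sub_mul_sq_le_sub {α : Type*} {F G : α → ℝ → ℝ} {q a C R : ℝ} (hq : 2 ≤ q)
    (hR : 0 ≤ R) (hC : 0 ≤ C) (hF : ∀ x s, 0 ≤ F x s)
    (hFR : ∀ x s, R ≤ |s| → (C + 1) * |s| ^ q ≤ F x s)
    (hG : ∀ x s, G x s ≤ a * s ^ 2 + C * |s| ^ q) (x : α) (s : ℝ) :
    |s| ^ q - (a + (C + 1) * R ^ (q - 2)) * s ^ 2 ≤ F x s - G x s := by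
  have hRq : 0 ≤ (C + 1) * R ^ (q - 2) * s ^ 2 := by positivity
  rcases le_or_gt R |s| with hs | hs
  · linarith [hFR x s hs, hG x s]
  · have hsq := abs_rpow_le_rpow_sub_two_mul_sq hq hs.le
    nlinarith [hF x s, hG x s]

lemma rpow_mul_integral_sub_le_integral_div_sq {α : Type*} [MeasurableSpace α]
    {μ : Measure α} {H : α → ℝ → ℝ} {q D t : ℝ} {v : α → ℝ}
    (hH : ∀ x s, |s| ^ q - D * s ^ 2 ≤ H x s)
    (ht : 0 < t) (hvq : Integrable (fun x => |v x| ^ q) μ)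
    (hv2 : Integrable (fun x => v x ^ 2) μ)
    (hHv : Integrable (fun x => H x (t * v x)) μ) :
    t ^ (q - 2) * ∫ x, |v x| ^ q ∂μ - D * ∫ x, v x ^ 2 ∂μ ≤
      1 / t ^ 2 * ∫ x, H x (t * v x) ∂μ := by
  have hFG : ∀ x, t ^ q * |v x| ^ q - D * t ^ 2 * v x ^ 2 ≤ H x (t * v x) := fun x => by
    have := hH x (t * v x)
    rwa [abs_mul, abs_of_pos ht, Real.mul_rpow ht.le (abs_nonneg _), mul_pow, ← mul_assoc]
      at this
  have hint :
      ∫ x, (t ^ q * |v x| ^ q - D * t ^ 2 * v x ^ 2) ∂μ ≤ ∫ x, H x (t * v x) ∂μ :=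
    integral_mono ((hvq.const_mul _).sub (hv2.const_mul _)) hHv hFG
  rw [integral_sub (hvq.const_mul _) (hv2.const_mul _), integral_const_mul,
    integral_const_mul] at hint
  have htq : t ^ q = t ^ (q - 2) * t ^ 2 := by
    rw [← Real.rpow_natCast, ← Real.rpow_add ht]
    norm_num
  calc t ^ (q - 2) * ∫ x, |v x| ^ q ∂μ - D * ∫ x, v x ^ 2 ∂μ
      = 1 / t ^ 2 * (t ^ q * ∫ x, |v x| ^ q ∂μ - D * t ^ 2 * ∫ x, v x ^ 2 ∂μ) := by
        rw [htq]
        field_simp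
    _ ≤ 1 / t ^ 2 * ∫ x, H x (t * v x) ∂μ := by gcongr

theorem stmt18_general (q : ℝ) (hq : 2 < q)
    (F G : (Fin 3 → ℝ) → ℝ → ℝ)
    (hFpos : ∀ x s, 0 ≤ F x s)
    (hFsuper : ∀ M > (0:ℝ), ∃ R > (0:ℝ), ∀ x s, R ≤ |s| → M * |s| ^ q ≤ F x s)
    (hG : ∀ ε > (0:ℝ), ∃ C > (0:ℝ), ∀ x s, |G x s| ≤ ε * s ^ 2 + C * |s| ^ q)
    (t : ℕ → ℝ) (ht : Tendsto t atTop atTop)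
    (u : ℕ → (Fin 3 → ℝ) → ℝ) (u₀ : (Fin 3 → ℝ) → ℝ)
    (hum : ∀ n, Measurable (u n))
    (hu₀ : ¬ (u₀ =ᵐ[volume] (0 : (Fin 3 → ℝ) → ℝ)))
    (hu₀2 : MemLp u₀ 2 volume) (hu₀q : MemLp u₀ (ENNReal.ofReal q) volume)
    (hL2 : Tendsto (fun n => eLpNorm (u n - u₀) 2 volume) atTop (nhds 0))
    (hLq : Tendsto (fun n => eLpNorm (u n - u₀) (ENNReal.ofReal q) volume) atTop (nhds 0))
    (hFint : ∀ n, Integrable (fun x => F x (t n * u n x)) volume)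
    (hGint : ∀ n, Integrable (fun x => G x (t n * u n x)) volume) :
    Tendsto
      (fun n => (1 / (t n) ^ 2) *
        ∫ x : Fin 3 → ℝ, (F x (t n * u n x) - G x (t n * u n x)) ∂volume)
      atTop atTop := by
  obtain ⟨C, hC, hGC⟩ := hG 1 one_pos
  obtain ⟨R, hR, hFR⟩ := hFsuper (C + 1) (by linarith)
  have hFG := rpow_sub_mul_sq_le_sub hq.le hR.le hC.le hFpos hFR
    fun x s => (le_abs_self _).trans (hGC x s)
  have hu n := (hum n).aestronglyMeasurable (μ := volume)
  have hB : Tendsto (fun n => ∫ x, u n x ^ 2 ∂volume) atTop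
      (𝓝 (∫ x, u₀ x ^ 2 ∂volume)) := by
    simpa [Real.norm_eq_abs] using
      tendsto_integral_norm_rpow_of_tendsto_eLpNorm_sub one_le_two ENNReal.ofNat_ne_top hu hu₀2
        hL2
  refine tendsto_atTop_mono' _ ?_ <| tendsto_rpow_mul_sub_mul_atTop (r := q - 2)
    (D := 1 + (C + 1) * R ^ (q - 2)) (by linarith) ht
    (tendsto_integral_abs_rpow_of_tendsto_eLpNorm_sub (by linarith) hu hu₀q hLq)
    (integral_abs_rpow_pos (by linarith) hu₀q hu₀) hB
  filter_upwards [eventually_memLp_of_tendsto_eLpNorm_sub hu hu₀q hLq,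
    eventually_memLp_of_tendsto_eLpNorm_sub hu hu₀2 hL2, ht.eventually_gt_atTop 0]
    with n hnq hn2 htn
  exact rpow_mul_integral_sub_le_integral_div_sq hFG htn (hnq.integrable_abs_rpow (by linarith))
    hn2.integrable_sq ((hFint n).sub (hGint n))

theorem stmt18 (q : ℝ) (hq : 2 < q)
    (F G : (Fin 3 → ℝ) → ℝ → ℝ)
    (hFmeas : Measurable (Function.uncurry F)) (hGmeas : Measurable (Function.uncurry G))
    (hFc : ∀ x, Continuous (F x)) (hGc : ∀ x, Continuous (G x))
    (hFpos : ∀ x s, 0 ≤ F x s)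
    (hFsuper : ∀ M > (0:ℝ), ∃ R > (0:ℝ), ∀ x s, R ≤ |s| → M * |s| ^ q ≤ F x s)
    (hG : ∀ ε > (0:ℝ), ∃ C > (0:ℝ), ∀ x s, |G x s| ≤ ε * s ^ 2 + C * |s| ^ q)
    (t : ℕ → ℝ) (ht : Tendsto t atTop atTop)
    (u : ℕ → (Fin 3 → ℝ) → ℝ) (u₀ : (Fin 3 → ℝ) → ℝ)
    (hum : ∀ n, Measurable (u n)) (hu₀m : Measurable u₀)
    (hu₀ : ¬ (u₀ =ᵐ[volume] (0 : (Fin 3 → ℝ) → ℝ)))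
    (hu₀2 : MemLp u₀ 2 volume) (hu₀q : MemLp u₀ (ENNReal.ofReal q) volume)
    (hL2 : Tendsto (fun n => eLpNorm (u n - u₀) 2 volume) atTop (nhds 0))
    (hLq : Tendsto (fun n => eLpNorm (u n - u₀) (ENNReal.ofReal q) volume) atTop (nhds 0))
    (hae : ∀ᵐ x ∂volume, Tendsto (fun n => u n x) atTop (nhds (u₀ x)))
    (hFint : ∀ n, Integrable (fun x => F x (t n * u n x)) volume)
    (hGint : ∀ n, Integrable (fun x => G x (t n * u n x)) volume) :
    Tendsto
      (fun n => (1 / (t n) ^ 2) *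
        ∫ x : Fin 3 → ℝ, (F x (t n * u n x) - G x (t n * u n x)) ∂volume)
      atTop atTop :=
  stmt18_general q hq F G hFpos hFsuper hG t ht u u₀ hum hu₀ hu₀2 hu₀q hL2 hLq hFint hGint
end
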